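/- For g ∈ ℝ^T, there exists A ⊆ T with OPT(g) = SOL(A) if and only if there exists an optimal super-reparametrization f of g with OPT(g) = OPT(f). -/

import Mathlib

open Finset

variable {V : Type*} {D : Type*}

/-- A tuple `(S, k)` where `S ∈ C` is a scope and `k : D^S`. -/
abbrev Tup (C : Finset (Finset V)) (D : Type*) : Type _ :=
  (S : {S : Finset V // S ∈ C}) × ({v : V // v ∈ S.1} → D)

variable [Fintype V] [DecidableEq V] [Fintype D] [DecidableEq D] [Nonempty D]

/-- WCSP objective `⟨f, φ(x)⟩ = Σ_{S∈C} f_S(x[S])`. -/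
def val (C : Finset (Finset V)) (f : Tup C D → ℝ) (x : V → D) : ℝ :=
  ∑ S : {S : Finset V // S ∈ C}, f ⟨S, fun i => x i.1⟩

/-- Upper bound `B(f) = Σ_{S∈C} max_{k∈D^S} f_S(k)`. -/
noncomputable def B (C : Finset (Finset V)) (f : Tup C D → ℝ) : ℝ :=
  ∑ S : {S : Finset V // S ∈ C},
    Finset.univ.sup' Finset.univ_nonempty (fun k : {v : V // v ∈ S.1} → D => f ⟨S, k⟩)

/-- The active-tuple CSP: tuples whose weight is maximal within their scope. -/
def Astar (C : Finset (Finset V)) (f : Tup C D → ℝ) : Set (Tup C D) :=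
  {t | ∀ k : {v : V // v ∈ t.1.1} → D, f ⟨t.1, k⟩ ≤ f t}

/-- Solution set of a CSP `A ⊆ T`. -/
def SOL (C : Finset (Finset V)) (A : Set (Tup C D)) : Set (V → D) :=
  {x | ∀ S : {S : Finset V // S ∈ C}, (⟨S, fun i => x i.1⟩ : Tup C D) ∈ A}

/-- `f` is a super-reparametrization of `g`. -/
def SuperRepar (C : Finset (Finset V)) (g f : Tup C D → ℝ) : Prop :=
  ∀ x : V → D, val C g x ≤ val C f x

/-- Set of optimal assignments of WCSP `g`. -/
def OPT (C : Finset (Finset V)) (g : Tup C D → ℝ) : Set (V → D) :=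
  {x | ∀ y : V → D, val C g y ≤ val C g x}

/-- `d` is an `R`-deactivating direction for CSP `A`. -/
def Deact (C : Finset (Finset V)) (A R : Set (Tup C D)) (d : Tup C D → ℝ) : Prop :=
  (∀ x : V → D, 0 ≤ val C d x) ∧ (∀ t ∈ R, d t < 0) ∧ (∀ t ∈ A \ R, d t = 0)

/-- Minimal CSP for a set of assignments `X`. -/
def Amin (C : Finset (Finset V)) (X : Set (V → D)) : Set (Tup C D) :=
  ⋂₀ {A : Set (Tup C D) | X ⊆ SOL C A}

/-!
Every super-reparametrization `f` of `g` satisfies `max g ≤ ⟨f, φ(x*)⟩ ≤ B(f)` for an optimal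
`x*`, and a constant `f` attains `B(f) = max g`; so `f` is optimal exactly when `B(f) = max g`,
and then `OPT(f) = SOL(A*(f))`. This gives `OPT(g) = OPT(f) = SOL(A*(f))` in one direction.
Conversely, if `OPT(g) = SOL(A)`, the weights equal to a constant `c` on `A` and to `c - ε` off `A`
have `OPT = SOL(A)` and `B = max g`, and for `ε` small compared with the gap between `max g` and
the non-optimal values they form a super-reparametrization of `g`.
-/

section Objective

omit [Fintype V] [DecidableEq V] [Fintype D] [DecidableEq D] [Nonempty D]

variable {C : Finset (Finset V)}

theorem val_lt_of_notMem_OPT {g : Tup C D → ℝ} {x₀ x : V → D} (hx₀ : x₀ ∈ OPT C g)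
    (hx : x ∉ OPT C g) : val C g x < val C g x₀ := by
  simp only [OPT, Set.mem_ofPred_eq, not_forall, not_le] at hx
  obtain ⟨y, hy⟩ := hx
  exact hy.trans_le (hx₀ y)

theorem val_const (c : ℝ) (x : V → D) : val C (fun _ => c) x = #C * c := by
  simp [_root_.val]

theorem exists_card_mul_eq_val (g : Tup C D → ℝ) (x : V → D) : ∃ c : ℝ, #C * c = val C g x := by
  rcases C.eq_empty_or_nonempty with rfl | hC
  · exact ⟨0, by simp [_root_.val]⟩
  · exact ⟨val C g x / #C, mul_div_cancel₀ _ (Nat.cast_ne_zero.2 hC.card_pos.ne')⟩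

open Classical in
noncomputable def penalized (C : Finset (Finset V)) (A : Set (Tup C D)) (c ε : ℝ) : Tup C D → ℝ :=
  fun t => if t ∈ A then c else c - ε

variable {A : Set (Tup C D)} {c ε : ℝ}

theorem penalized_le (hε : 0 ≤ ε) (t : Tup C D) : penalized C A c ε t ≤ c := by
  unfold penalized
  split_ifs <;> linarith

theorem sub_le_penalized (hε : 0 ≤ ε) (t : Tup C D) : c - ε ≤ penalized C A c ε t := by
  unfold penalized
  split_ifs <;> linarith

theorem val_penalized_of_mem_SOL {x : V → D} (hx : x ∈ SOL C A) :
    val C (penalized C A c ε) x = #C * c := by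
  rw [← val_const c x]
  exact sum_congr rfl fun S _ => if_pos (hx S)

theorem val_penalized_le (hε : 0 ≤ ε) (x : V → D) : val C (penalized C A c ε) x ≤ #C * c :=
  (sum_le_sum fun _ _ => penalized_le hε _).trans_eq (val_const c x)

theorem card_mul_sub_le_val_penalized (hε : 0 ≤ ε) (x : V → D) :
    #C * (c - ε) ≤ val C (penalized C A c ε) x :=
  (val_const (c - ε) x).symm.trans_le (sum_le_sum fun _ _ => sub_le_penalized hε _)

theorem val_penalized_lt (hε : 0 < ε) {x : V → D} (hx : x ∉ SOL C A) :
    val C (penalized C A c ε) x < #C * c := by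
  obtain ⟨S, hS⟩ : ∃ S, (⟨S, fun i => x i.1⟩ : Tup C D) ∉ A := by simpa [SOL] using hx
  rw [← val_const c x]
  refine sum_lt_sum (fun _ _ => penalized_le hε.le _) ⟨S, mem_univ S, ?_⟩
  simp only [penalized, if_neg hS]
  linarith

theorem OPT_penalized (hε : 0 < ε) (hA : (SOL C A).Nonempty) :
    OPT C (penalized C A c ε) = SOL C A := by
  obtain ⟨x₀, hx₀⟩ := hA
  ext x
  refine ⟨fun hx => ?_, fun hx y => ?_⟩
  · by_contra hxA
    exact (val_penalized_lt hε hxA).not_ge (val_penalized_of_mem_SOL hx₀ ▸ hx x₀)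
  · exact val_penalized_of_mem_SOL hx ▸ val_penalized_le hε.le y

end Objective

section Bound

omit [Fintype V] [DecidableEq D]

variable {C : Finset (Finset V)}

theorem val_le_B (f : Tup C D → ℝ) (x : V → D) : val C f x ≤ B C f :=
  sum_le_sum fun S _ => le_sup' (fun k => f ⟨S, k⟩) (mem_univ _)

theorem val_eq_B_iff_mem_SOL_Astar {f : Tup C D → ℝ} {x : V → D} :
    val C f x = B C f ↔ x ∈ SOL C (Astar C f) := by
  rw [_root_.val, B, sum_eq_sum_iff_of_le fun S _ => le_sup' (fun k => f ⟨S, k⟩) (mem_univ _)]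
  simp only [mem_univ, true_implies, SOL, Astar, Set.mem_ofPred_eq]
  refine forall_congr' fun S =>
    ⟨fun h k => h ▸ le_sup' (fun k => f ⟨S, k⟩) (mem_univ k), fun h => ?_⟩
  exact le_antisymm (le_sup' (fun k => f ⟨S, k⟩) (mem_univ _)) (sup'_le _ _ fun k _ => h k)

theorem OPT_eq_SOL_Astar {f : Tup C D → ℝ} (h : ∃ x, val C f x = B C f) :
    OPT C f = SOL C (Astar C f) := by
  obtain ⟨x₀, hx₀⟩ := h
  ext x
  rw [← val_eq_B_iff_mem_SOL_Astar]
  exact ⟨fun hx => le_antisymm (val_le_B f x) (hx₀ ▸ hx x₀), fun hx y => hx ▸ val_le_B f y⟩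

theorem B_const (c : ℝ) : B C (fun _ : Tup C D => c) = #C * c := by
  simp [B]

theorem B_penalized_le {A : Set (Tup C D)} {c ε : ℝ} (hε : 0 ≤ ε) :
    B C (penalized C A c ε) ≤ #C * c :=
  (sum_le_sum fun _ _ => sup'_le _ _ fun _ _ => penalized_le hε _).trans_eq (by simp)

theorem exists_superRepar_B_le {g : Tup C D → ℝ} {x₀ : V → D} (hx₀ : x₀ ∈ OPT C g) :
    ∃ f, SuperRepar C g f ∧ B C f ≤ val C g x₀ := by
  obtain ⟨c, hc⟩ := exists_card_mul_eq_val g x₀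
  exact ⟨fun _ => c, fun x => by rw [val_const, hc]; exact hx₀ x, ((B_const c).trans hc).le⟩

end Bound

section Finite

omit [DecidableEq D]

variable {C : Finset (Finset V)}

theorem exists_mem_OPT (g : Tup C D → ℝ) : ∃ x, x ∈ OPT C g := by
  obtain ⟨x, -, hx⟩ := exists_max_image univ (val C g) univ_nonempty
  exact ⟨x, fun y => hx y (mem_univ y)⟩

omit [Nonempty D] in
theorem exists_pos_add_le_of_notMem_OPT {g : Tup C D → ℝ} {x₀ : V → D} (hx₀ : x₀ ∈ OPT C g) :
    ∃ δ > 0, ∀ x ∉ OPT C g, val C g x + δ ≤ val C g x₀ := by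
  classical
  rcases (univ.filter (· ∉ OPT C g)).eq_empty_or_nonempty with hs | hs
  · refine ⟨1, one_pos, fun x hx => ?_⟩
    have hxs : x ∈ univ.filter (· ∉ OPT C g) := by simpa using hx
    simp [hs] at hxs
  · obtain ⟨x₁, hx₁, hmax⟩ := exists_max_image _ (val C g) hs
    refine ⟨val C g x₀ - val C g x₁, sub_pos.2 (val_lt_of_notMem_OPT hx₀ (mem_filter.1 hx₁).2),
      fun x hx => ?_⟩
    linarith [hmax x (by simpa using hx)]

theorem exists_superRepar_B_le_OPT_eq_of_OPT_eq_SOL {g : Tup C D → ℝ} {A : Set (Tup C D)}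
    {x₀ : V → D} (hx₀ : x₀ ∈ OPT C g) (hA : OPT C g = SOL C A) :
    ∃ f, SuperRepar C g f ∧ B C f ≤ val C g x₀ ∧ OPT C f = OPT C g := by
  obtain ⟨δ, hδ, hgap⟩ := exists_pos_add_le_of_notMem_OPT hx₀
  obtain ⟨c, hc⟩ := exists_card_mul_eq_val g x₀
  set ε := δ / (#C + 1)
  have hε : 0 < ε := by positivity
  have hεδ : #C * ε ≤ δ := by
    rw [mul_div_assoc', div_le_iff₀ (by positivity)]
    linarith
  refine ⟨penalized C A c ε, fun x => ?_, hc ▸ B_penalized_le hε.le, ?_⟩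
  · by_cases hx : x ∈ OPT C g
    · rw [val_penalized_of_mem_SOL (hA ▸ hx), hc]
      exact hx₀ x
    · linarith [card_mul_sub_le_val_penalized (A := A) (c := c) hε.le x, hgap x hx,
        mul_sub (#C : ℝ) c ε]
  · rw [OPT_penalized hε ⟨x₀, hA ▸ hx₀⟩, hA]

end Finite

theorem stmt15 (C : Finset (Finset V)) (g : Tup C D → ℝ) :
    (∃ A : Set (Tup C D), OPT C g = SOL C A) ↔
      (∃ f : Tup C D → ℝ, SuperRepar C g f ∧
        (∀ f' : Tup C D → ℝ, SuperRepar C g f' → B C f ≤ B C f') ∧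
        OPT C g = OPT C f) := by
  obtain ⟨x₀, hx₀⟩ := exists_mem_OPT g
  constructor
  · rintro ⟨A, hA⟩
    obtain ⟨f, hgf, hB, hOPT⟩ := exists_superRepar_B_le_OPT_eq_of_OPT_eq_SOL hx₀ hA
    exact ⟨f, hgf, fun f' hgf' => hB.trans ((hgf' x₀).trans (val_le_B f' x₀)), hOPT.symm⟩
  · rintro ⟨f, hgf, hmin, hOPT⟩
    obtain ⟨f₀, hgf₀, hB₀⟩ := exists_superRepar_B_le hx₀
    refine ⟨Astar C f, hOPT.trans (OPT_eq_SOL_Astar ⟨x₀, ?_⟩)⟩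
    exact le_antisymm (val_le_B f x₀) ((hmin f₀ hgf₀).trans (hB₀.trans (hgf x₀)))
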